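/- Let n ≥ 2, a, k ≥ 1 with d = ak + 1. With 𝔻 as before, define v(x) = (1/k)(x_1 − 1/a) for x_1 > 1/a and v(x) = 0 otherwise. Then (n!·a/(ak+1))·∫_𝔻 (x_n + v(x_1)) dx = (2ak+1)/((ak+1)(n+1)). -/

import Mathlib

open MeasureTheory

namespace Stmt16Aux

open Set

/-- The open simplex of size `s` in `ℝ^m`. -/
def T (m : ℕ) (s : ℝ) : Set (Fin m → ℝ) := {y | (∀ i, 0 < y i) ∧ ∑ i, y i < s}

lemma measurableSet_T (m : ℕ) (s : ℝ) : MeasurableSet (T m s) := by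
  have h1 : MeasurableSet {y : Fin m → ℝ | ∀ i, 0 < y i} := by
    have : {y : Fin m → ℝ | ∀ i, 0 < y i} = ⋂ i, {y | 0 < y i} := by ext y; simp
    rw [this]
    exact MeasurableSet.iInter fun i =>
      measurableSet_lt measurable_const (measurable_pi_apply i)
  have h2 : MeasurableSet {y : Fin m → ℝ | ∑ i, y i < s} :=
    measurableSet_lt (Finset.measurable_sum _ fun i _ => measurable_pi_apply i)
      measurable_const
  exact h1.inter h2

lemma T_empty (m : ℕ) {s : ℝ} (h : s ≤ 0) : T (m + 1) s = ∅ := by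
  ext y
  simp only [T, mem_setOf_eq, mem_empty_iff_false, iff_false, not_and, not_lt]
  intro hpos
  have : 0 < ∑ i, y i := Finset.sum_pos (fun i _ => hpos i) Finset.univ_nonempty
  linarith

lemma aux_integrable {α : Type*} [MeasureSpace α] [TopologicalSpace α]
    [OpensMeasurableSpace α] [T2Space α] [IsFiniteMeasureOnCompacts (volume : Measure α)]
    {S K : Set α} (hS : MeasurableSet S) (hK : IsCompact K) (hSK : S ⊆ K)
    {G : α → ℝ} (hG : Continuous G) : Integrable (S.indicator G) := by
  rw [integrable_indicator_iff hS]
  exact (hG.continuousOn.integrableOn_compact hK).mono_set hSK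

lemma fubini_pi {m : ℕ} (f : ℝ × (Fin m → ℝ) → ℝ) (hf : Integrable f) :
    ∫ p, f p = ∫ t, ∫ z, f (t, z) := by
  rw [Measure.volume_eq_prod] at hf ⊢
  exact integral_prod f hf

lemma int_sub_pow (K : ℝ) (p : ℕ) :
    ∫ u in (0:ℝ)..K, (K - u) ^ p = K ^ (p + 1) / (p + 1) := by
  rw [intervalIntegral.integral_comp_sub_left (fun x => x ^ p) K]
  simp [integral_pow]

lemma preimage_T (m : ℕ) (s : ℝ) :
    T (m + 2) s =
      (MeasurableEquiv.piFinSuccAbove (fun _ : Fin (m + 2) => ℝ) 0) ⁻¹'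
        {p : ℝ × (Fin (m + 1) → ℝ) |
          (0 < p.1 ∧ ∀ i, 0 < p.2 i) ∧ p.1 + ∑ i, p.2 i < s} := by
  ext x
  simp only [T, mem_setOf_eq, mem_preimage, MeasurableEquiv.piFinSuccAbove_apply,
    Fin.zero_succAbove, Fin.forall_fin_succ, Fin.sum_univ_succ]
  tauto

lemma simplex_int : ∀ m : ℕ, ∀ c s : ℝ, 0 ≤ s →
    ∫ y in T (m + 1) s, (c + y (Fin.last m)) =
      c * s ^ (m + 1) / (Nat.factorial (m + 1) : ℝ) +
        s ^ (m + 2) / (Nat.factorial (m + 2) : ℝ) := by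
  intro m
  induction m with
  | zero =>
    intro c s hs
    have hset : T 1 s = (MeasurableEquiv.funUnique (Fin 1) ℝ) ⁻¹' (Ioo 0 s) := by
      ext y
      simp [T, Fin.forall_fin_one, Fin.sum_univ_one, MeasurableEquiv.funUnique,
        Equiv.funUnique, mem_Ioo]
    have h1 : ∫ y in T 1 s, (c + y (Fin.last 0)) = ∫ t in Ioo (0:ℝ) s, (c + t) := by
      rw [hset]
      exact (volume_preserving_funUnique (Fin 1) ℝ).setIntegral_preimage_emb
        (MeasurableEquiv.funUnique (Fin 1) ℝ).measurableEmbedding (fun t => c + t) (Ioo 0 s)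
    rw [h1, ← integral_Ioc_eq_integral_Ioo, ← intervalIntegral.integral_of_le hs,
      intervalIntegral.integral_add intervalIntegrable_const intervalIntegral.intervalIntegrable_id]
    simp [integral_id]
    norm_num [Nat.factorial]
    ring
  | succ m ih =>
    intro c s hs
    set S : Set (ℝ × (Fin (m + 1) → ℝ)) :=
      {p | (0 < p.1 ∧ ∀ i, 0 < p.2 i) ∧ p.1 + ∑ i, p.2 i < s} with hSdef
    set G : ℝ × (Fin (m + 1) → ℝ) → ℝ := fun p => c + p.2 (Fin.last m) with hGdef
    have hSm : MeasurableSet S := by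
      have hset : S = ({p : ℝ × (Fin (m + 1) → ℝ) | 0 < p.1} ∩
          ⋂ i, {p : ℝ × (Fin (m + 1) → ℝ) | 0 < p.2 i}) ∩
          {p : ℝ × (Fin (m + 1) → ℝ) | p.1 + ∑ i, p.2 i < s} := by
        ext p
        simp only [hSdef, mem_setOf_eq, mem_inter_iff, mem_iInter]
      rw [hset]
      exact ((measurable_fst (measurableSet_Ioi : MeasurableSet (Ioi (0:ℝ)))).inter
        (MeasurableSet.iInter fun i =>
          ((measurable_pi_apply i).comp measurable_snd) (measurableSet_Ioi (a := (0:ℝ))))).inter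
        ((measurable_fst.add <|
          Finset.measurable_sum _ fun i _ => (measurable_pi_apply i).comp measurable_snd)
          (measurableSet_Iio (a := s)))
    have hSK : S ⊆ Icc ((0:ℝ), (0 : Fin (m + 1) → ℝ)) (s, fun _ => s) := by
      rintro ⟨t, z⟩ ⟨⟨ht, hz⟩, hsum⟩
      have hzpos : 0 < ∑ i, z i := Finset.sum_pos (fun i _ => hz i) Finset.univ_nonempty
      refine ⟨⟨ht.le, fun i => (hz i).le⟩, ⟨by dsimp only; linarith, fun i => ?_⟩⟩
      have : z i ≤ ∑ j, z j := Finset.single_le_sum (fun j _ => (hz j).le) (Finset.mem_univ i)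
      dsimp only
      linarith
    have hG : Continuous G := continuous_const.add ((continuous_apply _).comp continuous_snd)
    have hint : Integrable (S.indicator G) := aux_integrable hSm isCompact_Icc hSK hG
    have h1 : ∫ y in T (m + 2) s, (c + y (Fin.last (m + 1))) = ∫ p in S, G p := by
      rw [preimage_T]
      exact (volume_preserving_piFinSuccAbove
        (fun _ : Fin (m + 2) => ℝ) 0).setIntegral_preimage_emb
        (MeasurableEquiv.measurableEmbedding _) G S
    have h2 : ∫ p in S, G p = ∫ t, ∫ z, S.indicator G (t, z) := by
      rw [← integral_indicator hSm]
      exact fubini_pi _ hint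
    have h3 : ∀ t, (∫ z, S.indicator G (t, z)) =
        (Ioo (0:ℝ) s).indicator (fun t => c * (s - t) ^ (m + 1) / (Nat.factorial (m + 1) : ℝ)
          + (s - t) ^ (m + 2) / (Nat.factorial (m + 2) : ℝ)) t := by
      intro t
      rcases le_or_gt t 0 with ht | ht
      · have hz : (fun z : Fin (m + 1) → ℝ => S.indicator G (t, z)) = fun _ => 0 := by
          funext z
          apply indicator_of_notMem
          rintro ⟨⟨ht', _⟩, _⟩
          exact absurd ht' (not_lt.2 ht)
        rw [hz, integral_zero, indicator_of_notMem]
        exact fun h => absurd h.1 (not_lt.2 ht)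
      · have hsl : (fun z : Fin (m + 1) → ℝ => S.indicator G (t, z)) =
            (T (m + 1) (s - t)).indicator (fun z => c + z (Fin.last m)) := by
          funext z
          by_cases hz : z ∈ T (m + 1) (s - t)
          · have hmem : (t, z) ∈ S := ⟨⟨ht, hz.1⟩, by
              show t + ∑ i, z i < s
              have h2z : ∑ i, z i < s - t := hz.2
              linarith⟩
            rw [indicator_of_mem hz, indicator_of_mem hmem]
          · rw [indicator_of_notMem hz, indicator_of_notMem]
            rintro ⟨⟨_, hpos⟩, hsum⟩
            have hsum' : t + ∑ i, z i < s := hsum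
            exact hz ⟨hpos, by linarith⟩
        rw [hsl, integral_indicator (measurableSet_T _ _)]
        rcases lt_or_ge t s with hts | hts
        · rw [ih c (s - t) (by linarith),
            indicator_of_mem (show t ∈ Ioo (0:ℝ) s from ⟨ht, hts⟩)]
        · rw [T_empty m (by linarith),
            indicator_of_notMem (fun h => absurd h.2 (not_lt.2 hts))]
          simp
    rw [h1, h2]
    simp only [h3]
    rw [integral_indicator measurableSet_Ioo, ← integral_Ioc_eq_integral_Ioo,
      ← intervalIntegral.integral_of_le hs]
    have hI1 : IntervalIntegrable
        (fun t => c * (s - t) ^ (m + 1) / (Nat.factorial (m + 1) : ℝ)) volume 0 s := by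
      apply Continuous.intervalIntegrable; fun_prop
    have hI2 : IntervalIntegrable
        (fun t => (s - t) ^ (m + 2) / (Nat.factorial (m + 2) : ℝ)) volume 0 s := by
      apply Continuous.intervalIntegrable; fun_prop
    rw [intervalIntegral.integral_add hI1 hI2]
    have j1 : ∫ t in (0:ℝ)..s, c * (s - t) ^ (m + 1) / (Nat.factorial (m + 1) : ℝ)
        = (c / (Nat.factorial (m + 1) : ℝ)) * (s ^ (m + 2) / ((m : ℝ) + 2)) := by
      have e1 : ∀ t : ℝ, c * (s - t) ^ (m + 1) / (Nat.factorial (m + 1) : ℝ)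
          = (c / (Nat.factorial (m + 1) : ℝ)) * (s - t) ^ (m + 1) := fun t => by ring
      simp_rw [e1]
      rw [intervalIntegral.integral_const_mul, int_sub_pow]
      push_cast; ring
    have j2 : ∫ t in (0:ℝ)..s, (s - t) ^ (m + 2) / (Nat.factorial (m + 2) : ℝ)
        = (1 / (Nat.factorial (m + 2) : ℝ)) * (s ^ (m + 3) / ((m : ℝ) + 3)) := by
      have e2 : ∀ t : ℝ, (s - t) ^ (m + 2) / (Nat.factorial (m + 2) : ℝ)
          = (1 / (Nat.factorial (m + 2) : ℝ)) * (s - t) ^ (m + 2) := fun t => by ring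
      simp_rw [e2]
      rw [intervalIntegral.integral_const_mul, int_sub_pow]
      push_cast; ring
    rw [j1, j2]
    have f1 : (Nat.factorial (m + 2) : ℝ) = ((m : ℝ) + 2) * (Nat.factorial (m + 1) : ℝ) := by
      rw [Nat.factorial_succ]; push_cast; ring
    have f2 : (Nat.factorial (m + 3) : ℝ) = ((m : ℝ) + 3) * (Nat.factorial (m + 2) : ℝ) := by
      rw [Nat.factorial_succ]; push_cast; ring
    have hf1 : (Nat.factorial (m + 1) : ℝ) ≠ 0 := Nat.cast_ne_zero.2 (Nat.factorial_ne_zero _)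
    have hf2 : (Nat.factorial (m + 2) : ℝ) ≠ 0 := Nat.cast_ne_zero.2 (Nat.factorial_ne_zero _)
    rw [f2, f1]
    field_simp

lemma simplex_int' (m : ℕ) (c s : ℝ) (hs : 0 ≤ s) :
    ∫ y in T (m + 1) s, (y (Fin.last m) + c) =
      c * s ^ (m + 1) / (Nat.factorial (m + 1) : ℝ) +
        s ^ (m + 2) / (Nat.factorial (m + 2) : ℝ) := by
  have h : (fun y : Fin (m + 1) → ℝ => y (Fin.last m) + c)
      = fun y => c + y (Fin.last m) := funext fun y => add_comm _ _
  rw [h]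
  exact simplex_int m c s hs

lemma erase_sum (m : ℕ) (x : Fin (m + 2) → ℝ) :
    ∑ i ∈ Finset.univ.erase (0 : Fin (m + 2)), x i = ∑ j : Fin (m + 1), x j.succ := by
  have h := Finset.add_sum_erase Finset.univ x (Finset.mem_univ (0 : Fin (m + 2)))
  have h2 := Fin.sum_univ_succ x
  linarith

lemma mylast (m : ℕ) (h : m + 2 - 1 < m + 2) :
    (⟨m + 2 - 1, h⟩ : Fin (m + 2)) = Fin.last (m + 1) := rfl

set_option maxHeartbeats 1000000 in
lemma key (m a k : ℕ) (ha : 1 ≤ a) (hk : 1 ≤ k) :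
    ∫ x in {x : Fin (m + 2) → ℝ | (∀ i, 0 < x i) ∧
        ((x 0 ≤ 1 / (a : ℝ) ∧
            (∑ i ∈ Finset.univ.erase (0 : Fin (m + 2)), x i) < (a : ℝ) * x 0) ∨
          (1 / (a : ℝ) < x 0 ∧
            x 0 < ((a : ℝ) * k + 1) / a ∧
            (∑ i ∈ Finset.univ.erase (0 : Fin (m + 2)), x i) <
              (1 / (k : ℝ)) * (((a : ℝ) * k + 1) / a - x 0)))},
      (x (Fin.last (m + 1)) +
        (if 1 / (a : ℝ) < x 0 then (1 / (k : ℝ)) * (x 0 - 1 / (a : ℝ)) else 0))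
    = (2 * (a : ℝ) * k + 1) /
        ((a : ℝ) * (((m : ℝ) + 3) * (((m : ℝ) + 2) * (Nat.factorial (m + 1) : ℝ)))) := by
  have hA : (0 : ℝ) < a := by exact_mod_cast Nat.pos_of_ne_zero (by omega)
  have hK : (1 : ℝ) ≤ k := by exact_mod_cast hk
  have hKpos : (0 : ℝ) < k := by linarith
  have hA1 : (1 : ℝ) ≤ a := by exact_mod_cast ha
  set A : ℝ := (a : ℝ) with hAdef
  set K : ℝ := (k : ℝ) with hKdef
  set dA : ℝ := (A * K + 1) / A with hdAdef
  have hdA : dA - 1 / A = K := by rw [hdAdef]; field_simp; ring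
  have h1A : (0 : ℝ) < 1 / A := by positivity
  have hdAgt : 1 / A < dA := by linarith
  set w : ℝ → ℝ := fun t => if 1 / A < t then (1 / K) * (t - 1 / A) else 0 with hwdef
  set S : Set (ℝ × (Fin (m + 1) → ℝ)) :=
    {p | (0 < p.1 ∧ ∀ i, 0 < p.2 i) ∧
      ((p.1 ≤ 1 / A ∧ ∑ i, p.2 i < A * p.1) ∨
        (1 / A < p.1 ∧ p.1 < dA ∧ ∑ i, p.2 i < (1 / K) * (dA - p.1)))} with hSdef
  set G : ℝ × (Fin (m + 1) → ℝ) → ℝ := fun p => p.2 (Fin.last m) + w p.1 with hGdef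
  -- measurability of S
  have hm1 : Measurable fun p : ℝ × (Fin (m + 1) → ℝ) => p.1 := measurable_fst
  have hms : Measurable fun p : ℝ × (Fin (m + 1) → ℝ) => ∑ i, p.2 i :=
    Finset.measurable_sum _ fun i _ => (measurable_pi_apply i).comp measurable_snd
  have hSm : MeasurableSet S := by
    have hset : S = ({p : ℝ × (Fin (m + 1) → ℝ) | 0 < p.1} ∩
        ⋂ i, {p : ℝ × (Fin (m + 1) → ℝ) | 0 < p.2 i}) ∩
        ((({p : ℝ × (Fin (m + 1) → ℝ) | p.1 ≤ 1 / A} ∩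
            {p : ℝ × (Fin (m + 1) → ℝ) | ∑ i, p.2 i < A * p.1})) ∪
          (({p : ℝ × (Fin (m + 1) → ℝ) | 1 / A < p.1} ∩
            {p : ℝ × (Fin (m + 1) → ℝ) | p.1 < dA}) ∩
            {p : ℝ × (Fin (m + 1) → ℝ) | ∑ i, p.2 i < (1 / K) * (dA - p.1)})) := by
      ext p
      simp only [hSdef, mem_setOf_eq, mem_inter_iff, mem_iInter, mem_union]
      tauto
    rw [hset]
    refine MeasurableSet.inter (MeasurableSet.inter ?_ ?_) (MeasurableSet.union ?_ ?_)
    · exact hm1 (measurableSet_Ioi (a := (0:ℝ)))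
    · exact MeasurableSet.iInter fun i =>
        ((measurable_pi_apply i).comp measurable_snd) (measurableSet_Ioi (a := (0:ℝ)))
    · exact (hm1 (measurableSet_Iic (a := 1 / A))).inter
        (measurableSet_lt hms (measurable_const.mul hm1))
    · exact ((hm1 (measurableSet_Ioi (a := 1 / A))).inter
        (hm1 (measurableSet_Iio (a := dA)))).inter
        (measurableSet_lt hms (measurable_const.mul (measurable_const.sub hm1)))
  -- S is contained in a box
  have hSK : S ⊆ Icc ((0:ℝ), (0 : Fin (m + 1) → ℝ)) (dA, fun _ => 1) := by
    rintro ⟨t, z⟩ ⟨⟨ht, hz⟩, hor⟩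
    have hsumle : ∑ i, z i ≤ 1 := by
      rcases hor with ⟨h1, h2⟩ | ⟨h1, h2, h3⟩
      · have e1 : A * t ≤ A * (1 / A) := mul_le_mul_of_nonneg_left h1 hA.le
        have e2 : A * (1 / A) = 1 := by field_simp
        have h2' : ∑ i, z i < A * t := h2
        linarith
      · have e1 : (1 / K) * (dA - t) ≤ (1 / K) * K := by
          apply mul_le_mul_of_nonneg_left _ (by positivity)
          linarith
        have e2 : (1 / K) * K = 1 := by field_simp
        have h3' : ∑ i, z i < (1 / K) * (dA - t) := h3
        linarith
    have htle : t ≤ dA := by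
      rcases hor with ⟨h1, _⟩ | ⟨_, h2, _⟩
      · linarith
      · exact h2.le
    refine ⟨⟨ht.le, fun i => (hz i).le⟩, ⟨htle, fun i => ?_⟩⟩
    have : z i ≤ ∑ j, z j := Finset.single_le_sum (fun j _ => (hz j).le) (Finset.mem_univ i)
    show z i ≤ 1
    linarith
  have hweq : w = fun t => (1 / K) * max (t - 1 / A) 0 := by
    funext t
    simp only [hwdef]
    by_cases h : 1 / A < t
    · rw [if_pos h, max_eq_left (by linarith)]
    · push_neg at h
      rw [if_neg (not_lt.2 h), max_eq_right (by linarith), mul_zero]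
  have hwcont : Continuous w := by
    rw [hweq]
    exact continuous_const.mul ((continuous_id.sub continuous_const).max continuous_const)
  have hG : Continuous G := ((continuous_apply _).comp continuous_snd).add
    (hwcont.comp continuous_fst)
  have hint : Integrable (S.indicator G) := aux_integrable hSm isCompact_Icc hSK hG
  -- transfer to the product space
  have hD2 : {x : Fin (m + 2) → ℝ | (∀ i, 0 < x i) ∧
        ((x 0 ≤ 1 / A ∧
            (∑ i ∈ Finset.univ.erase (0 : Fin (m + 2)), x i) < A * x 0) ∨
          (1 / A < x 0 ∧ x 0 < dA ∧
            (∑ i ∈ Finset.univ.erase (0 : Fin (m + 2)), x i) <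
              (1 / K) * (dA - x 0)))}
      = (MeasurableEquiv.piFinSuccAbove (fun _ : Fin (m + 2) => ℝ) 0) ⁻¹' S := by
    ext x
    simp only [hSdef, mem_setOf_eq, mem_preimage, MeasurableEquiv.piFinSuccAbove_apply,
      Fin.zero_succAbove, Fin.forall_fin_succ, erase_sum]
    tauto
  have h1 : ∫ x in {x : Fin (m + 2) → ℝ | (∀ i, 0 < x i) ∧
        ((x 0 ≤ 1 / A ∧
            (∑ i ∈ Finset.univ.erase (0 : Fin (m + 2)), x i) < A * x 0) ∨
          (1 / A < x 0 ∧ x 0 < dA ∧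
            (∑ i ∈ Finset.univ.erase (0 : Fin (m + 2)), x i) <
              (1 / K) * (dA - x 0)))},
      (x (Fin.last (m + 1)) + w (x 0)) = ∫ p in S, G p := by
    rw [hD2]
    exact (volume_preserving_piFinSuccAbove
      (fun _ : Fin (m + 2) => ℝ) 0).setIntegral_preimage_emb
      (MeasurableEquiv.measurableEmbedding _) G S
  have h2 : ∫ p in S, G p = ∫ t, ∫ z, S.indicator G (t, z) := by
    rw [← integral_indicator hSm]
    exact fubini_pi _ hint
  -- slicewise evaluation
  have h3 : ∀ t, (∫ z, S.indicator G (t, z)) =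
      (Ioc (0:ℝ) (1 / A)).indicator
        (fun t => (A * t) ^ (m + 2) / (Nat.factorial (m + 2) : ℝ)) t +
      (Ioo (1 / A) dA).indicator
        (fun t => (1 / K) * (t - 1 / A) * ((1 / K) * (dA - t)) ^ (m + 1)
            / (Nat.factorial (m + 1) : ℝ)
          + ((1 / K) * (dA - t)) ^ (m + 2) / (Nat.factorial (m + 2) : ℝ)) t := by
    intro t
    rcases le_or_gt t 0 with ht | ht
    · have hz : (fun z : Fin (m + 1) → ℝ => S.indicator G (t, z)) = fun _ => 0 := by
        funext z
        apply indicator_of_notMem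
        rintro ⟨⟨ht', _⟩, _⟩
        exact absurd ht' (not_lt.2 ht)
      rw [hz, integral_zero,
        indicator_of_notMem (fun h => absurd h.1 (not_lt.2 ht)),
        indicator_of_notMem (fun h => absurd h.1 (not_lt.2 (by linarith : t ≤ 1 / A)))]
      norm_num
    · rcases le_or_gt t (1 / A) with h2t | h2t
      · -- first region
        have hw0 : w t = 0 := if_neg (not_lt.2 h2t)
        have hsl : (fun z : Fin (m + 1) → ℝ => S.indicator G (t, z)) =
            (T (m + 1) (A * t)).indicator (fun z => z (Fin.last m) + w t) := by
          funext z
          by_cases hz : z ∈ T (m + 1) (A * t)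
          · have hmem : (t, z) ∈ S := ⟨⟨ht, hz.1⟩, Or.inl ⟨h2t, hz.2⟩⟩
            rw [indicator_of_mem hz, indicator_of_mem hmem]
          · rw [indicator_of_notMem hz, indicator_of_notMem]
            rintro ⟨⟨_, hpos⟩, hor⟩
            rcases hor with ⟨_, hs2⟩ | ⟨hlt, _, _⟩
            · exact hz ⟨hpos, hs2⟩
            · exact absurd hlt (not_lt.2 h2t)
        rw [hsl, integral_indicator (measurableSet_T _ _),
          simplex_int' m (w t) (A * t) (by positivity), hw0,
          indicator_of_mem (show t ∈ Ioc (0:ℝ) (1 / A) from ⟨ht, h2t⟩),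
          indicator_of_notMem (show t ∉ Ioo (1 / A) dA from
            fun h => absurd h.1 (not_lt.2 h2t))]
        ring
      · rcases lt_or_ge t dA with h3t | h3t
        · -- second region
          have hwp : w t = (1 / K) * (t - 1 / A) := if_pos h2t
          have hsl : (fun z : Fin (m + 1) → ℝ => S.indicator G (t, z)) =
              (T (m + 1) ((1 / K) * (dA - t))).indicator
                (fun z => z (Fin.last m) + w t) := by
            funext z
            by_cases hz : z ∈ T (m + 1) ((1 / K) * (dA - t))
            · have hmem : (t, z) ∈ S := ⟨⟨by linarith, hz.1⟩, Or.inr ⟨h2t, h3t, hz.2⟩⟩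
              rw [indicator_of_mem hz, indicator_of_mem hmem]
            · rw [indicator_of_notMem hz, indicator_of_notMem]
              rintro ⟨⟨_, hpos⟩, hor⟩
              rcases hor with ⟨hle, _⟩ | ⟨_, _, hs3⟩
              · exact absurd h2t (not_lt.2 hle)
              · exact hz ⟨hpos, hs3⟩
          rw [hsl, integral_indicator (measurableSet_T _ _),
            simplex_int' m (w t) ((1 / K) * (dA - t))
              (mul_nonneg (by positivity) (by linarith)), hwp,
            indicator_of_notMem (show t ∉ Ioc (0:ℝ) (1 / A) from
              fun h => absurd h2t (not_lt.2 h.2)),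
            indicator_of_mem (show t ∈ Ioo (1 / A) dA from ⟨h2t, h3t⟩)]
          ring
        · -- beyond the region
          have hz : (fun z : Fin (m + 1) → ℝ => S.indicator G (t, z)) = fun _ => 0 := by
            funext z
            apply indicator_of_notMem
            rintro ⟨⟨_, _⟩, hor⟩
            rcases hor with ⟨hle, _⟩ | ⟨_, hlt, _⟩
            · linarith
            · linarith
          rw [hz, integral_zero,
            indicator_of_notMem (show t ∉ Ioc (0:ℝ) (1 / A) from
              fun h => by have := h.2; linarith),
            indicator_of_notMem (show t ∉ Ioo (1 / A) dA from
              fun h => by have := h.2; linarith)]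
          norm_num
  -- outer integral
  have hint1 : Integrable ((Ioc (0:ℝ) (1 / A)).indicator
      (fun t => (A * t) ^ (m + 2) / (Nat.factorial (m + 2) : ℝ))) :=
    aux_integrable measurableSet_Ioc isCompact_Icc Ioc_subset_Icc_self (by fun_prop)
  have hint2 : Integrable ((Ioo (1 / A) dA).indicator
      (fun t => (1 / K) * (t - 1 / A) * ((1 / K) * (dA - t)) ^ (m + 1)
          / (Nat.factorial (m + 1) : ℝ)
        + ((1 / K) * (dA - t)) ^ (m + 2) / (Nat.factorial (m + 2) : ℝ))) :=
    aux_integrable measurableSet_Ioo isCompact_Icc Ioo_subset_Icc_self (by fun_prop)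
  rw [h1, h2]
  simp only [h3]
  rw [integral_add hint1 hint2, integral_indicator measurableSet_Ioc,
    integral_indicator measurableSet_Ioo,
    ← intervalIntegral.integral_of_le h1A.le,
    ← integral_Ioc_eq_integral_Ioo, ← intervalIntegral.integral_of_le hdAgt.le]
  -- first interval integral
  have hf1 : (Nat.factorial (m + 1) : ℝ) ≠ 0 := Nat.cast_ne_zero.2 (Nat.factorial_ne_zero _)
  have hf2 : (Nat.factorial (m + 2) : ℝ) ≠ 0 := Nat.cast_ne_zero.2 (Nat.factorial_ne_zero _)
  have f1 : (Nat.factorial (m + 2) : ℝ) = ((m : ℝ) + 2) * (Nat.factorial (m + 1) : ℝ) := by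
    rw [Nat.factorial_succ]; push_cast; ring
  have jV1 : ∫ t in (0:ℝ)..(1 / A), (A * t) ^ (m + 2) / (Nat.factorial (m + 2) : ℝ)
      = 1 / (A * (((m : ℝ) + 3) * (((m : ℝ) + 2) * (Nat.factorial (m + 1) : ℝ)))) := by
    have e1 : ∀ t : ℝ, (A * t) ^ (m + 2) / (Nat.factorial (m + 2) : ℝ)
        = (A ^ (m + 2) / (Nat.factorial (m + 2) : ℝ)) * t ^ (m + 2) := fun t => by
      rw [mul_pow]; ring
    simp_rw [e1]
    rw [intervalIntegral.integral_const_mul, integral_pow]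
    have hp : ((1 / A) : ℝ) ^ (m + 2 + 1) = 1 / (A ^ (m + 2) * A) := by
      rw [div_pow, one_pow, pow_succ]
    rw [hp, f1]
    have hApow : A ^ (m + 2) ≠ 0 := pow_ne_zero _ (ne_of_gt hA)
    push_cast
    field_simp
    ring
  -- second interval integral, by substitution u = t - 1/A
  set f : ℝ → ℝ := fun u => (1 / K) * u * ((1 / K) * (K - u)) ^ (m + 1)
      / (Nat.factorial (m + 1) : ℝ)
    + ((1 / K) * (K - u)) ^ (m + 2) / (Nat.factorial (m + 2) : ℝ) with hfdef
  have jV2 : ∫ t in (1 / A)..dA,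
        ((1 / K) * (t - 1 / A) * ((1 / K) * (dA - t)) ^ (m + 1)
            / (Nat.factorial (m + 1) : ℝ)
          + ((1 / K) * (dA - t)) ^ (m + 2) / (Nat.factorial (m + 2) : ℝ))
      = 2 * K / (((m : ℝ) + 3) * (((m : ℝ) + 2) * (Nat.factorial (m + 1) : ℝ))) := by
    have e2 : ∀ t : ℝ, (1 / K) * (t - 1 / A) * ((1 / K) * (dA - t)) ^ (m + 1)
            / (Nat.factorial (m + 1) : ℝ)
          + ((1 / K) * (dA - t)) ^ (m + 2) / (Nat.factorial (m + 2) : ℝ)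
        = f (t - 1 / A) := by
      intro t
      simp only [hfdef]
      have : dA - t = K - (t - 1 / A) := by linarith
      rw [this]
    simp_rw [e2]
    rw [intervalIntegral.integral_comp_sub_right f (1 / A), sub_self, hdA]
    have hK0 : K ≠ 0 := ne_of_gt hKpos
    have hKpow : K ^ (m + 2) ≠ 0 := pow_ne_zero _ hK0
    have e3 : ∀ u : ℝ, f u =
        (K / (K ^ (m + 2) * (Nat.factorial (m + 1) : ℝ))) * (K - u) ^ (m + 1)
        + (1 / (K ^ (m + 2) * (Nat.factorial (m + 2) : ℝ))
            - 1 / (K ^ (m + 2) * (Nat.factorial (m + 1) : ℝ))) * (K - u) ^ (m + 2) := by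
      intro u
      simp only [hfdef]
      have hu : u * (K - u) ^ (m + 1) = K * (K - u) ^ (m + 1) - (K - u) ^ (m + 2) := by
        have : (K - u) ^ (m + 2) = (K - u) ^ (m + 1) * (K - u) := by ring
        rw [this]; ring
      have hmp1 : ((1 / K) * (K - u)) ^ (m + 1) = (K - u) ^ (m + 1) / K ^ (m + 1) := by
        rw [mul_pow, div_pow, one_pow]; ring
      have hmp2 : ((1 / K) * (K - u)) ^ (m + 2) = (K - u) ^ (m + 2) / K ^ (m + 2) := by
        rw [mul_pow, div_pow, one_pow]; ring
      rw [hmp1, hmp2]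
      have hKpow1 : K ^ (m + 1) ≠ 0 := pow_ne_zero _ hK0
      field_simp
      ring
    simp_rw [e3]
    rw [intervalIntegral.integral_add
        (by apply Continuous.intervalIntegrable; fun_prop)
        (by apply Continuous.intervalIntegrable; fun_prop),
      intervalIntegral.integral_const_mul, intervalIntegral.integral_const_mul,
      int_sub_pow, int_sub_pow, f1]
    push_cast
    have h1 : K ^ (m + 1 + 1) = K ^ (m + 2) := rfl
    have h2 : K ^ (m + 2 + 1) = K ^ (m + 2) * K := pow_succ _ _
    rw [h2]
    field_simp
    ring
  rw [jV1, jV2]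
  have hAK : A * K + 1 ≠ 0 := by positivity
  field_simp
  ring


end Stmt16Aux


open MeasureTheory

/-- Continuation of the Eckardt-point integral computation: with `𝔻` as
before and `v(x) = (1/k)(x₁ − 1/a)` when `x₁ > 1/a` (and `0` otherwise),
`(n!·a/(ak+1))·∫_𝔻 (xₙ + v(x)) dx = (2ak+1)/((ak+1)(n+1))`. -/
theorem stmt16 (n a k : ℕ) (hn : 2 ≤ n) (ha : 1 ≤ a) (hk : 1 ≤ k)
    (D : Set (Fin n → ℝ))
    (hD : D = {x : Fin n → ℝ | (∀ i, 0 < x i) ∧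
      ((x ⟨0, by omega⟩ ≤ 1 / (a : ℝ) ∧
          (∑ i ∈ Finset.univ.erase ⟨0, by omega⟩, x i) < (a : ℝ) * x ⟨0, by omega⟩) ∨
        (1 / (a : ℝ) < x ⟨0, by omega⟩ ∧
          x ⟨0, by omega⟩ < ((a : ℝ) * k + 1) / a ∧
          (∑ i ∈ Finset.univ.erase ⟨0, by omega⟩, x i) <
            (1 / (k : ℝ)) * (((a : ℝ) * k + 1) / a - x ⟨0, by omega⟩)))})
    (v : (Fin n → ℝ) → ℝ)
    (hv : v = fun x => if 1 / (a : ℝ) < x ⟨0, by omega⟩ then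
      (1 / (k : ℝ)) * (x ⟨0, by omega⟩ - 1 / (a : ℝ)) else 0) :
    ((n.factorial : ℝ) * a / ((a : ℝ) * k + 1)) *
        (∫ x in D, (x ⟨n - 1, by omega⟩ + v x) ∂volume)
      = (2 * (a : ℝ) * k + 1) / (((a : ℝ) * k + 1) * ((n : ℝ) + 1)) := by
  obtain ⟨m, rfl⟩ : ∃ m, n = m + 2 := ⟨n - 2, by omega⟩
  subst hD hv
  simp only [Fin.mk_zero, Stmt16Aux.mylast]
  erw [Stmt16Aux.key m a k ha hk]
  have hA : (0 : ℝ) < a := by exact_mod_cast Nat.pos_of_ne_zero (by omega)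
  have hf1 : (Nat.factorial (m + 1) : ℝ) ≠ 0 := Nat.cast_ne_zero.2 (Nat.factorial_ne_zero _)
  have f1 : (Nat.factorial (m + 2) : ℝ) = ((m : ℝ) + 2) * (Nat.factorial (m + 1) : ℝ) := by
    rw [Nat.factorial_succ]; push_cast; ring
  have hden : ((a : ℝ) * k + 1) ≠ 0 := by positivity
  rw [f1]
  push_cast
  field_simp
  ring
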